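/- arXiv:1903.08728 — 2 statements merged into one kernel-verified Lean document; each statement's English description precedes it below -/
import Mathlib

section
/- Suppose V : ℝⁿ → ℝ is differentiable with force field f(x) = -DV(x), and f is continuous at x. Define g(x,y) = f_dd(x,y) - ((V(y)-V(x))/‖y-x‖²)(y-x) for a directional discrete derivative f_dd that is continuous with f_dd(x,x) = f(x). Then g(x,y) - P⊥_{y-x} f(x) → 0 as y → x, where P⊥_{y-x} denotes orthogonal projection onto the complement of span(y-x). -/
open RealInnerProductSpace

/-- If `f_dd` is a directional discrete derivative consistent with `f = -∇V` at `x`,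
then `g(x,y) - P⊥_{y-x} f(x) → 0` as `y → x`. -/
theorem stmt4 (n : ℕ) (V : EuclideanSpace ℝ (Fin n) → ℝ)
    (hV : Differentiable ℝ V)
    (f : EuclideanSpace ℝ (Fin n) → EuclideanSpace ℝ (Fin n))
    (hf : ∀ x, f x = -gradient V x)
    (hfc : ∀ x, ContinuousAt f x)
    (fdd : EuclideanSpace ℝ (Fin n) → EuclideanSpace ℝ (Fin n) → EuclideanSpace ℝ (Fin n))
    (hdir : ∀ x y, ⟪fdd x y, y - x⟫ = V y - V x)
    (x : EuclideanSpace ℝ (Fin n))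
    (hcons : Filter.Tendsto (fun y => fdd x y) (nhdsWithin x {x}ᶜ) (nhds (f x))) :
    Filter.Tendsto
      (fun y =>
        (fdd x y - ((V y - V x) / ‖y - x‖ ^ 2) • (y - x)) -
          (f x - (⟪f x, y - x⟫ / ‖y - x‖ ^ 2) • (y - x)))
      (nhdsWithin x {x}ᶜ) (nhds 0) := by
  set F := fun y =>
        (fdd x y - ((V y - V x) / ‖y - x‖ ^ 2) • (y - x)) -
          (f x - (⟪f x, y - x⟫ / ‖y - x‖ ^ 2) • (y - x)) with hF
  have hd : Filter.Tendsto (fun y => fdd x y - f x) (nhdsWithin x {x}ᶜ) (nhds 0) := by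
    simpa using hcons.sub (tendsto_const_nhds (x := f x))
  have hdn : Filter.Tendsto (fun y => 2 * ‖fdd x y - f x‖) (nhdsWithin x {x}ᶜ) (nhds 0) := by
    have := (hd.norm.const_mul 2)
    simpa using this
  have key : ∀ y, y ≠ x → ‖F y‖ ≤ 2 * ‖fdd x y - f x‖ := by
    intro y hy
    have hu : y - x ≠ 0 := sub_ne_zero.mpr hy
    have hFy : F y = (fdd x y - f x) -
        ((⟪fdd x y - f x, y - x⟫) / ‖y - x‖ ^ 2) • (y - x) := by
      rw [hF]
      simp only
      rw [inner_sub_left, hdir x y, sub_div, sub_smul]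
      module
    rw [hFy]
    have hCS : |⟪fdd x y - f x, y - x⟫| ≤ ‖fdd x y - f x‖ * ‖y - x‖ :=
      abs_real_inner_le_norm _ _
    have hnu : (0:ℝ) < ‖y - x‖ := norm_pos_iff.mpr hu
    calc ‖(fdd x y - f x) - ((⟪fdd x y - f x, y - x⟫) / ‖y - x‖ ^ 2) • (y - x)‖
        ≤ ‖fdd x y - f x‖ + ‖((⟪fdd x y - f x, y - x⟫) / ‖y - x‖ ^ 2) • (y - x)‖ :=
          norm_sub_le _ _
      _ ≤ ‖fdd x y - f x‖ + ‖fdd x y - f x‖ := by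
          gcongr
          rw [norm_smul, norm_div, Real.norm_eq_abs, Real.norm_eq_abs, abs_pow, abs_norm]
          rw [div_mul_eq_mul_div, div_le_iff₀ (by positivity)]
          calc |⟪fdd x y - f x, y - x⟫| * ‖y - x‖
              ≤ (‖fdd x y - f x‖ * ‖y - x‖) * ‖y - x‖ := by gcongr
            _ = ‖fdd x y - f x‖ * ‖y - x‖ ^ 2 := by ring
      _ = 2 * ‖fdd x y - f x‖ := by ring
  have h0 : Filter.Tendsto (fun y => ‖F y‖) (nhdsWithin x {x}ᶜ) (nhds 0) := by
    apply squeeze_zero' (Filter.Eventually.of_forall fun y => norm_nonneg _)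
    · filter_upwards [self_mem_nhdsWithin] with y hy
      exact key y hy
    · exact hdn
  exact tendsto_zero_iff_norm_tendsto_zero.mpr h0
end

section
/- For the conservative algorithmic force f_cons, the projection of f_cons(x,y) onto the direction y-x equals ((V(y)-V(x))/‖y-x‖²)(y-x), assuming ⟨f(y)-f(x), y-x⟩ ≠ 0 and y ≠ x. -/
open RealInnerProductSpace

/-- The parallel projection of the conservative algorithmic force onto `y-x` is
`((V(y)-V(x))/‖y-x‖²)•(y-x)`. -/
theorem stmt12 (n : ℕ) (V : EuclideanSpace ℝ (Fin n) → ℝ)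
    (hV : Differentiable ℝ V)
    (f : EuclideanSpace ℝ (Fin n) → EuclideanSpace ℝ (Fin n))
    (hf : ∀ x, f x = -gradient V x)
    (x y : EuclideanSpace ℝ (Fin n))
    (hne : ⟪f y - f x, y - x⟫ ≠ 0) (hxy : y ≠ x) :
    letI fcons := (2:ℝ)⁻¹ • (f x + f y) +
      ((V y - V x - ⟪(2:ℝ)⁻¹ • (f x + f y), y - x⟫) / ⟪f y - f x, y - x⟫) • (f y - f x)
    (⟪fcons, y - x⟫ / ‖y - x‖ ^ 2) • (y - x) =
      ((V y - V x) / ‖y - x‖ ^ 2) • (y - x) := by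
  congr 1
  rw [inner_add_left, real_inner_smul_left, real_inner_smul_left, div_mul_cancel₀ _ hne]
  ring
end
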